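/- arXiv:2207.12179 — 2 statements merged into one kernel-verified Lean document; each statement's English description precedes it below -/
import Mathlib

section
/- In the common-priority college admissions model, if in the run of the time-constrained dynamic mechanism (with all students playing straightforward strategies and a binding round limit T) some student is assigned to a college she strictly prefers to her assignment under the student-proposing deferred acceptance outcome, then there exists a student with strictly higher priority who is unassigned under the TCDM outcome but assigned under the DA outcome. -/
open Finset
open scoped Classical

/-- A common-priority college admissions market: `n` students (index `0` is the
highest priority / highest score), `m` colleges with capacities `q`, and for each
student an injective ranking of the options in `Option (Fin m)` (`none` = being
unassigned / matched to oneself); a lower rank means more preferred. -/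
structure Market (n m : ℕ) where
  q : Fin m → ℕ
  rank : Fin n → Option (Fin m) → ℕ
  rank_inj : ∀ i, Function.Injective (rank i)

namespace Market

variable {n m : ℕ}

/-- `i` strictly prefers option `a` to option `b`. -/
def Prefers (M : Market n m) (i : Fin n) (a b : Option (Fin m)) : Prop :=
  M.rank i a < M.rank i b

/-- A matching: each student gets a college or `none`, capacities respected. -/
def IsMatching (M : Market n m) (μ : Fin n → Option (Fin m)) : Prop :=
  ∀ c : Fin m, (univ.filter fun i => μ i = some c).card ≤ M.q c

/-- Individual rationality. -/
def IR (M : Market n m) (μ : Fin n → Option (Fin m)) : Prop :=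
  ∀ i c, μ i = some c → M.Prefers i (some c) none

/-- `(i, c)` blocks `μ`: `i` prefers `c` to her assignment and `c` has a free
seat or holds a student of strictly lower priority. -/
def Blocks (M : Market n m) (μ : Fin n → Option (Fin m)) (i : Fin n) (c : Fin m) : Prop :=
  M.Prefers i (some c) (μ i) ∧
    ((univ.filter fun j => μ j = some c).card < M.q c ∨ ∃ j, μ j = some c ∧ i < j)

/-- Stability: a matching, individually rational, with no blocking pair. -/
def Stable (M : Market n m) (μ : Fin n → Option (Fin m)) : Prop :=
  M.IsMatching μ ∧ M.IR μ ∧ ∀ i c, ¬ M.Blocks μ i c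

/-- Given an application profile, student `i` is tentatively held: she applies to
some college `c` and fewer than `q c` higher-priority students apply to `c`. -/
def Held (M : Market n m) (app : Fin n → Option (Fin m)) (i : Fin n) : Prop :=
  ∃ c, app i = some c ∧ (univ.filter fun j => app j = some c ∧ j < i).card < M.q c

/-- The tentative matching induced by an application profile. -/
noncomputable def tentative (M : Market n m) (app : Fin n → Option (Fin m)) (i : Fin n) :
    Option (Fin m) :=
  if M.Held app i then app i else none

/-- `i` meets the current cutoff of `c`: `c` has a free seat in the tentative
matching, or tentatively holds a student of lower priority than `i`. -/
def Feasible (M : Market n m) (app : Fin n → Option (Fin m)) (i : Fin n) (c : Fin m) : Prop :=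
  (univ.filter fun j => M.tentative app j = some c).card < M.q c ∨
    ∃ j, M.tentative app j = some c ∧ i < j

/-- The option `o` is available to `i`: `none` always is, a college iff `i`
meets its cutoff. -/
def FeasibleOpt (M : Market n m) (app : Fin n → Option (Fin m)) (i : Fin n)
    (o : Option (Fin m)) : Prop :=
  o = none ∨ ∃ c, o = some c ∧ M.Feasible app i c

/-- One round of simultaneous straightforward revision: students who are not
rejected keep their application; every rejected student applies to her most
preferred option among those whose cutoff she meets. -/
def Step (M : Market n m) (app app' : Fin n → Option (Fin m)) : Prop :=
  ∀ i,
    (M.tentative app i = app i → app' i = app i) ∧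
    (M.tentative app i ≠ app i →
      M.FeasibleOpt app i (app' i) ∧
        ∀ o, M.FeasibleOpt app i o → M.rank i (app' i) ≤ M.rank i o)

/-- A run of the TCDM under straightforward strategies: `app t` is the profile of
applications in round `t + 1`; in round one every student applies to her most
preferred option, and each later round is a straightforward revision.  The
outcome of the TCDM with round limit `T ≥ 1` is `M.tentative (app (T - 1))`. -/
def IsRun (M : Market n m) (app : ℕ → Fin n → Option (Fin m)) : Prop :=
  (∀ i o, M.rank i (app 0 i) ≤ M.rank i o) ∧ ∀ t, M.Step (app t) (app (t + 1))

/-- Admission cutoff of college `c` (student `i` has score `n - i`): the lowest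
score among tentatively held students if `c` is at capacity, `0` otherwise. -/
noncomputable def cutoff (M : Market n m) (app : Fin n → Option (Fin m)) (c : Fin m) : ℕ :=
  if h : M.q c ≤ (univ.filter fun j => M.tentative app j = some c).card ∧
      (univ.filter fun j => M.tentative app j = some c).Nonempty then
    n - ((univ.filter fun j => M.tentative app j = some c).max' h.2 : ℕ)
  else 0

/-- Serial dictatorship outcome: in priority order each student receives her most
preferred option among `none` and the colleges not yet filled by
higher-priority students. -/
def IsSerialDictatorship (M : Market n m) (μ : Fin n → Option (Fin m)) : Prop :=
  ∀ i,
    (μ i = none ∨ ∃ c, μ i = some c ∧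
        (univ.filter fun j => j < i ∧ μ j = some c).card < M.q c) ∧
    ∀ o, (o = none ∨ ∃ c, o = some c ∧
        (univ.filter fun j => j < i ∧ μ j = some c).card < M.q c) →
      M.rank i (μ i) ≤ M.rank i o

end Market

/-- The market induced by capacities `q` and a profile `P` of strict preferences
over colleges (every college acceptable, `none` ranked last), where the
preference order of student `i` ranks college `c` in position `P i c`. -/
noncomputable def mkMarket {n m : ℕ} (q : Fin m → ℕ) (P : Fin n → Equiv.Perm (Fin m)) :
    Market n m where
  q := q
  rank := fun i o => o.elim m fun c => (P i c : ℕ)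
  rank_inj := by
    intro i a b h
    match a, b with
    | none, none => rfl
    | none, some c =>
      simp only [Option.elim] at h
      exact absurd h.symm (Nat.ne_of_lt (P i c).isLt)
    | some c, none =>
      simp only [Option.elim] at h
      exact absurd h (Nat.ne_of_lt (P i c).isLt)
    | some c, some d =>
      simp only [Option.elim] at h
      exact congrArg some ((P i).injective (Fin.val_injective h))

/-!
Along a straightforward run every application is weakly preferred to the stable (DA) assignment:
a rejected student's DA college always meets its current cutoff, since otherwise some student held
there would block the stable matching. Now suppose the TCDM tentatively gives `j` a college `c`
she prefers to her DA assignment. As `(j, c)` does not block the DA matching, `c` is filled under DA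
by students of higher priority than `j`, and since the tentative matching respects capacities one of
them, `k`, is not tentatively held at `c`. Either `k` is tentatively unassigned, or she is held at a
college she applied to and hence prefers to her DA assignment; in the second case repeat with `k`.
Priorities strictly increase, so the descent ends at a higher-priority student who is unassigned
under the TCDM but assigned under DA.
-/

theorem Finset.exists_mem_notMem_of_card_le_of_mem {α : Type*} {s t : Finset α} {x : α}
    (hcard : #t ≤ #s) (hxt : x ∈ t) (hxs : x ∉ s) : ∃ k ∈ s, k ∉ t := by
  obtain ⟨k, hks, hkt⟩ :=
    exists_mem_notMem_of_card_lt_card ((card_erase_lt_of_mem hxt).trans_le hcard)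
  exact ⟨k, hks, fun hk => hkt (mem_erase.2 ⟨fun h => hxs (h ▸ hks), hk⟩)⟩

namespace Market

variable {n m : ℕ} {M : Market n m}

theorem tentative_eq_some_iff {a : Fin n → Option (Fin m)} {j : Fin n} {c : Fin m} :
    M.tentative a j = some c ↔ M.Held a j ∧ a j = some c := by
  unfold tentative
  split_ifs with h <;> simp [h]

theorem tentative_eq_of_ne_none {a : Fin n → Option (Fin m)} {j : Fin n}
    (h : M.tentative a j ≠ none) : M.tentative a j = a j := by
  unfold tentative at h ⊢
  split_ifs at h ⊢ with hH
  · rfl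
  · exact absurd rfl h

theorem isMatching_tentative (M : Market n m) (a : Fin n → Option (Fin m)) :
    M.IsMatching (M.tentative a) := by
  intro c
  -- Each held student is preceded by fewer than `q c` applicants to `c`, and that number
  -- strictly increases along the applicants to `c`.
  let before (j : Fin n) := #(univ.filter fun k => a k = some c ∧ k < j)
  have hmono : StrictMonoOn before {j | a j = some c} := by
    intro j₁ h₁ j₂ _ h12
    refine card_lt_card ((ssubset_iff_of_subset fun k hk => ?_).2 ⟨j₁, ?_, ?_⟩)
    · simp only [mem_filter, mem_univ, true_and] at hk ⊢
      exact ⟨hk.1, hk.2.trans h12⟩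
    · simpa using ⟨h₁, h12⟩
    · simp
  have hheld : ∀ j ∈ univ.filter fun j => M.tentative a j = some c,
      a j = some c ∧ before j < M.q c := by
    intro j hj
    obtain ⟨⟨d, hd, hcount⟩, hj⟩ := tentative_eq_some_iff.1 (mem_filter.1 hj).2
    obtain rfl : d = c := Option.some_injective _ (hd.symm.trans hj)
    exact ⟨hj, hcount⟩
  calc #(univ.filter fun j => M.tentative a j = some c)
      ≤ #(range (M.q c)) :=
        card_le_card_of_injOn before (fun j hj => mem_range.2 (hheld j hj).2)
          (hmono.injOn.mono fun j hj => (hheld j hj).1)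
    _ = M.q c := card_range _

theorem feasibleOpt_of_stable {μ : Fin n → Option (Fin m)} (hμ : M.Stable μ)
    {a : Fin n → Option (Fin m)} (hdom : ∀ k, M.rank k (a k) ≤ M.rank k (μ k))
    {j : Fin n} (hrej : M.tentative a j ≠ a j) : M.FeasibleOpt a j (μ j) := by
  cases hμj : μ j with
  | none => exact Or.inl rfl
  | some c =>
    refine Or.inr ⟨c, rfl, ?_⟩
    by_contra hfeas
    simp only [Feasible, not_or, not_exists, not_and, not_lt] at hfeas
    obtain ⟨hfull, hheld_le⟩ := hfeas
    have hj : j ∉ univ.filter fun k => M.tentative a k = some c := by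
      intro hj
      have hjc := (mem_filter.1 hj).2
      exact hrej (hjc.trans (tentative_eq_some_iff.1 hjc).2.symm)
    obtain ⟨k, hk, hkμ⟩ := exists_mem_notMem_of_card_le_of_mem ((hμ.1 c).trans hfull)
      (by simpa using hμj) hj
    simp only [mem_filter, mem_univ, true_and] at hk hkμ
    have hkj : k < j := (hheld_le k hk).lt_of_ne fun h => hkμ (h ▸ hμj)
    have hkc : M.Prefers k (some c) (μ k) := by
      have hak : a k = some c := (tentative_eq_some_iff.1 hk).2
      exact (hak ▸ hdom k).lt_of_ne fun h => hkμ (M.rank_inj k h).symm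
    exact hμ.2.2 k c ⟨hkc, Or.inr ⟨j, hμj, hkj⟩⟩

theorem IsRun.rank_le_of_stable {app : ℕ → Fin n → Option (Fin m)} (hrun : M.IsRun app)
    {μ : Fin n → Option (Fin m)} (hμ : M.Stable μ) (t : ℕ) (k : Fin n) :
    M.rank k (app t k) ≤ M.rank k (μ k) := by
  induction t generalizing k with
  | zero => exact hrun.1 k (μ k)
  | succ t ih =>
    by_cases hrej : M.tentative (app t) k = app t k
    · rw [(hrun.2 t k).1 hrej]
      exact ih k
    · exact ((hrun.2 t k).2 hrej).2 (μ k) (feasibleOpt_of_stable hμ ih hrej)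

theorem Stable.exists_lt_displaced {μ ν : Fin n → Option (Fin m)} (hμ : M.Stable μ)
    (hν : M.IsMatching ν) {j : Fin n} {c : Fin m} (hj : ν j = some c)
    (hjc : M.Prefers j (some c) (μ j)) : ∃ k < j, μ k = some c ∧ ν k ≠ some c := by
  have hjμ : μ j ≠ some c := fun h => (h ▸ hjc).false
  have hfull : M.q c ≤ #(univ.filter fun k => μ k = some c) ∧
      ∀ k, μ k = some c → k ≤ j := by
    simpa [Blocks, hjc] using hμ.2.2 j c
  obtain ⟨k, hk, hkν⟩ := exists_mem_notMem_of_card_le_of_mem ((hν c).trans hfull.1)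
    (by simpa using hj) (by simpa using hjμ)
  simp only [mem_filter, mem_univ, true_and] at hk hkν
  exact ⟨k, (hfull.2 k hk).lt_of_ne fun h => hjμ (h ▸ hk), hk, hkν⟩

theorem IR.rank_le_none {μ : Fin n → Option (Fin m)} (hμ : M.IR μ) (j : Fin n) :
    M.rank j (μ j) ≤ M.rank j none := by
  cases hμj : μ j with
  | none => exact le_rfl
  | some c => exact (hμ j c hμj).le

theorem exists_lt_unassigned_of_prefers_tentative {μ : Fin n → Option (Fin m)}
    (hμ : M.Stable μ) {a : Fin n → Option (Fin m)}
    (hdom : ∀ k, M.rank k (a k) ≤ M.rank k (μ k)) (j : Fin n)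
    (hj : M.Prefers j (M.tentative a j) (μ j)) :
    ∃ k < j, M.tentative a k = none ∧ μ k ≠ none := by
  induction j using WellFoundedLT.induction with
  | ind j ih =>
    obtain ⟨c, hjc⟩ := Option.ne_none_iff_exists'.1 fun h =>
      (hμ.2.1.rank_le_none j).not_gt (h ▸ hj)
    obtain ⟨k, hkj, hkμ, hkν⟩ :=
      hμ.exists_lt_displaced (M.isMatching_tentative a) hjc (hjc ▸ hj)
    by_cases hkν_none : M.tentative a k = none
    · exact ⟨k, hkj, hkν_none, by simp [hkμ]⟩
    -- Held students hold the college they apply to, which they weakly prefer to `μ`.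
    have hk : M.Prefers k (M.tentative a k) (μ k) := by
      refine (tentative_eq_of_ne_none hkν_none ▸ hdom k).lt_of_ne fun h => ?_
      exact hkν ((M.rank_inj k h).trans hkμ)
    obtain ⟨l, hlk, hl⟩ := ih k hkj hk
    exact ⟨l, hlk.trans hkj, hl⟩

end Market

theorem tcdm_gain_implies_higher_unassigned_general (n m : ℕ) (M : Market n m)
    (app : ℕ → Fin n → Option (Fin m)) (hrun : M.IsRun app)
    (T : ℕ)
    (μDA : Fin n → Option (Fin m)) (hDA : M.Stable μDA)
    (i : Fin n) (hi : M.Prefers i (M.tentative (app (T - 1)) i) (μDA i)) :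
    ∃ j : Fin n, j < i ∧ M.tentative (app (T - 1)) j = none ∧ μDA j ≠ none :=
  Market.exists_lt_unassigned_of_prefers_tentative hDA (hrun.rank_le_of_stable hDA (T - 1)) i hi

/-- if under the TCDM with binding round limit `T` some student is
assigned a college she strictly prefers to her DA assignment (DA outcome = the
unique stable matching), then some strictly higher-priority student is
unassigned under the TCDM outcome but assigned under the DA outcome. -/
theorem tcdm_gain_implies_higher_unassigned (n m : ℕ) (M : Market n m)
    (app : ℕ → Fin n → Option (Fin m)) (hrun : M.IsRun app)
    (T : ℕ) (hT : 1 ≤ T)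
    (μDA : Fin n → Option (Fin m)) (hDA : M.Stable μDA)
    (i : Fin n) (hi : M.Prefers i (M.tentative (app (T - 1)) i) (μDA i)) :
    ∃ j : Fin n, j < i ∧ M.tentative (app (T - 1)) j = none ∧ μDA j ≠ none :=
  tcdm_gain_implies_higher_unassigned_general n m M app hrun T μDA hDA i hi
end

section
/- In the common-priority model with i.i.d. uniformly random strict preferences, for every student the probability of being assigned to her first choice under the TCDM with straightforward strategies is weakly decreasing in the round limit T, i.e., p₁(T) ≥ p₁(T+1) for all T ≥ 1. -/
open Finset
open scoped Classical

/-!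
A student rejected by a college can never meet its cutoff again: every student holding a seat
there keeps applying, so the seats stay filled by students of higher priority, and straightforward
revisions only go to colleges whose cutoff is met. A student's round-one application is her first
choice, so if she holds her first choice in round `T + 1` she has never been rejected by it and
held it in round `T` as well. Thus for every preference profile the event "first choice under
round limit `T + 1`" implies the event "first choice under round limit `T`", and counting
profiles gives `p₁(T + 1) ≤ p₁(T)`.
-/

theorem Finset.le_card_filter_card_filter_lt_of_le_card {α : Type*} [LinearOrder α]
    {A : Finset α} {q : ℕ} (hq : q ≤ #A) :
    q ≤ #(A.filter fun j => #(A.filter (· < j)) < q) := by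
  set B := A.filter fun j => #(A.filter (· < j)) < q
  by_contra! hB
  have hne : (A \ B).Nonempty :=
    sdiff_nonempty.mpr fun hAB => (hq.trans (card_le_card hAB)).not_gt hB
  -- the least element of `A` outside `B` has only elements of `B` below it
  obtain ⟨hjA, hjB⟩ := mem_sdiff.mp ((A \ B).min'_mem hne)
  refine hjB (mem_filter.mpr ⟨hjA, (card_le_card fun k hk => ?_).trans_lt hB⟩)
  obtain ⟨hkA, hkj⟩ := mem_filter.mp hk
  by_contra hkB
  exact (min'_le _ k (mem_sdiff.mpr ⟨hkA, hkB⟩)).not_gt hkj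

namespace Market

variable {n m : ℕ} {M : Market n m} {app app' : Fin n → Option (Fin m)} {i : Fin n}
  {c : Fin m}

theorem tentative_eq_some_iff_s17 {j : Fin n} :
    M.tentative app j = some c ↔
      app j = some c ∧ (univ.filter fun k => app k = some c ∧ k < j).card < M.q c := by
  unfold tentative
  constructor
  · intro h
    split_ifs at h with hheld
    · obtain ⟨d, hd, hcard⟩ := hheld
      obtain rfl : d = c := Option.some_injective _ (hd.symm.trans h)
      exact ⟨hd, hcard⟩
  · rintro ⟨happ, hcard⟩
    rw [if_pos ⟨c, happ, hcard⟩, happ]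

theorem le_card_filter_tentative_eq_some
    (h : M.q c ≤ (univ.filter fun k => app k = some c).card) :
    M.q c ≤ (univ.filter fun j => M.tentative app j = some c).card := by
  convert le_card_filter_card_filter_lt_of_le_card h using 2
  ext j
  simp [tentative_eq_some_iff_s17, filter_filter]

theorem not_feasible_of_le_card
    (h : M.q c ≤ (univ.filter fun k => app k = some c ∧ k ≤ i).card) :
    ¬ M.Feasible app i c := by
  rintro (hfree | ⟨j, hj, hij⟩)
  · refine hfree.not_ge (le_card_filter_tentative_eq_some (h.trans (card_le_card ?_)))
    exact monotone_filter_right _ fun k _ hk => hk.1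
  · refine (tentative_eq_some_iff_s17.mp hj).2.not_ge (h.trans (card_le_card ?_))
    exact monotone_filter_right _ fun k _ hk => ⟨hk.1, hk.2.trans_lt hij⟩

theorem not_feasible_of_rejected (happ : app i = some c)
    (hrej : M.tentative app i ≠ app i) : ¬ M.Feasible app i c := by
  have hfull : M.q c ≤ (univ.filter fun k => app k = some c ∧ k < i).card :=
    not_lt.mp fun hlt => hrej (by rw [tentative_eq_some_iff_s17.mpr ⟨happ, hlt⟩, happ])
  exact not_feasible_of_le_card
    (hfull.trans (card_le_card (monotone_filter_right _ fun k _ hk => ⟨hk.1, hk.2.le⟩)))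

theorem Step.not_feasible (hstep : M.Step app app') (h : ¬ M.Feasible app i c) :
    ¬ M.Feasible app' i c := by
  simp only [Feasible, not_or, not_exists, not_and, not_lt] at h
  obtain ⟨hfull, hbelow⟩ := h
  refine not_feasible_of_le_card (hfull.trans (card_le_card fun j hj => ?_))
  have hheld : M.tentative app j = some c := (mem_filter.mp hj).2
  have happ : app j = some c := (tentative_eq_some_iff_s17.mp hheld).1
  have hkeep : app' j = app j := (hstep j).1 (hheld.trans happ.symm)
  exact mem_filter.mpr ⟨mem_univ j, hkeep.trans happ, hbelow j hheld⟩

theorem Step.ne_some_of_not_feasible (hstep : M.Step app app')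
    (hrej : M.tentative app i ≠ app i) (h : ¬ M.Feasible app i c) : app' i ≠ some c := by
  intro hc
  rcases ((hstep i).2 hrej).1 with hnone | ⟨d, hd, hfeas⟩
  · exact Option.some_ne_none c (hc.symm.trans hnone)
  · obtain rfl : c = d := Option.some_injective _ (hc.symm.trans hd)
    exact h hfeas

theorem IsRun.app_zero_eq_of_forall_rank_le {app : ℕ → Fin n → Option (Fin m)}
    {a : Option (Fin m)} (hrun : M.IsRun app) (h : ∀ o, M.rank i a ≤ M.rank i o) :
    app 0 i = a :=
  M.rank_inj i ((hrun.1 i a).antisymm (h _))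

theorem IsRun.held_or_not_feasible {app : ℕ → Fin n → Option (Fin m)} (hrun : M.IsRun app)
    (h0 : app 0 i = some c) : ∀ t,
    (app t i = some c ∧ ∀ s < t, M.tentative (app s) i = some c) ∨
      (app t i ≠ some c ∧ ¬ M.Feasible (app t) i c)
  | 0 => .inl ⟨h0, fun _ hs => absurd hs (Nat.not_lt_zero _)⟩
  | t + 1 => by
    have hstep := hrun.2 t
    by_cases hkept : M.tentative (app t) i = app t i
    · have hsame : app (t + 1) i = app t i := (hstep i).1 hkept
      rcases hrun.held_or_not_feasible h0 t with ⟨happ, hheld⟩ | ⟨happ, hinf⟩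
      · refine .inl ⟨hsame.trans happ, fun s hs => ?_⟩
        rcases Nat.lt_succ_iff_lt_or_eq.mp hs with hs | rfl
        exacts [hheld s hs, hkept.trans happ]
      · exact .inr ⟨hsame ▸ happ, hstep.not_feasible hinf⟩
    · have hinf : ¬ M.Feasible (app t) i c := by
        rcases hrun.held_or_not_feasible h0 t with ⟨happ, -⟩ | ⟨-, hinf⟩
        exacts [not_feasible_of_rejected happ hkept, hinf]
      exact .inr ⟨hstep.ne_some_of_not_feasible hkept hinf, hstep.not_feasible hinf⟩

theorem IsRun.tentative_eq_some_of_le {app : ℕ → Fin n → Option (Fin m)} {s t : ℕ}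
    (hrun : M.IsRun app) (h0 : app 0 i = some c) (hst : s ≤ t)
    (ht : M.tentative (app t) i = some c) : M.tentative (app s) i = some c := by
  rcases hrun.held_or_not_feasible h0 t with ⟨-, hheld⟩ | ⟨hne, -⟩
  · rcases hst.lt_or_eq with hlt | rfl
    exacts [hheld s hlt, ht]
  · exact absurd (tentative_eq_some_iff_s17.mp ht).1 hne

end Market

theorem mkMarket_rank_le_of_forall_rank_some_le {n m : ℕ} {q : Fin m → ℕ}
    {P : Fin n → Equiv.Perm (Fin m)} {i : Fin n} {c : Fin m}
    (h : ∀ c', (mkMarket q P).rank i (some c) ≤ (mkMarket q P).rank i (some c')) :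
    ∀ o, (mkMarket q P).rank i (some c) ≤ (mkMarket q P).rank i o
  | none => (P i c).isLt.le
  | some c' => h c'

theorem tcdm_first_choice_prob_antitone_general (n m : ℕ) (q : Fin m → ℕ)
    (T : ℕ) (i : Fin n) :
    ((Finset.univ : Finset (Fin n → Equiv.Perm (Fin m))).filter fun P =>
        ∀ app : ℕ → Fin n → Option (Fin m), (mkMarket q P).IsRun app →
          ∃ c : Fin m, (mkMarket q P).tentative (app (T + 1 - 1)) i = some c ∧
            ∀ c' : Fin m,
              (mkMarket q P).rank i (some c) ≤ (mkMarket q P).rank i (some c')).card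
      ≤
    ((Finset.univ : Finset (Fin n → Equiv.Perm (Fin m))).filter fun P =>
        ∀ app : ℕ → Fin n → Option (Fin m), (mkMarket q P).IsRun app →
          ∃ c : Fin m, (mkMarket q P).tentative (app (T - 1)) i = some c ∧
            ∀ c' : Fin m,
              (mkMarket q P).rank i (some c) ≤ (mkMarket q P).rank i (some c')).card := by
  refine card_le_card fun P hP => ?_
  simp only [mem_filter, mem_univ, true_and] at hP ⊢
  intro app hrun
  obtain ⟨c, hheld, htop⟩ := hP app hrun
  have h0 : app 0 i = some c :=
    hrun.app_zero_eq_of_forall_rank_le (mkMarket_rank_le_of_forall_rank_some_le htop)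
  exact ⟨c, hrun.tentative_eq_some_of_le h0 (by omega) hheld, htop⟩

/-- with i.i.d. uniformly random strict preferences, each
student's probability of receiving her first choice under the TCDM with
straightforward strategies is weakly decreasing in the round limit:
`p₁(T) ≥ p₁(T+1)` for all `T ≥ 1`. -/
theorem tcdm_first_choice_prob_antitone (n m : ℕ) (q : Fin m → ℕ)
    (T : ℕ) (hT : 1 ≤ T) (i : Fin n) :
    ((Finset.univ : Finset (Fin n → Equiv.Perm (Fin m))).filter fun P =>
        ∀ app : ℕ → Fin n → Option (Fin m), (mkMarket q P).IsRun app →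
          ∃ c : Fin m, (mkMarket q P).tentative (app (T + 1 - 1)) i = some c ∧
            ∀ c' : Fin m,
              (mkMarket q P).rank i (some c) ≤ (mkMarket q P).rank i (some c')).card
      ≤
    ((Finset.univ : Finset (Fin n → Equiv.Perm (Fin m))).filter fun P =>
        ∀ app : ℕ → Fin n → Option (Fin m), (mkMarket q P).IsRun app →
          ∃ c : Fin m, (mkMarket q P).tentative (app (T - 1)) i = some c ∧
            ∀ c' : Fin m,
              (mkMarket q P).rank i (some c) ≤ (mkMarket q P).rank i (some c')).card :=
  tcdm_first_choice_prob_antitone_general n m q T i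
end
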